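/- Let r ≥ 2, and let G_1, ..., G_r be pairwise edge-disjoint graphs on a common vertex set of size n whose edge sets partition the edges of K_n. Then the sum over i of the number of cliques of G_i is at most (r−1)(n+1) + 2^n. -/

import Mathlib

open SimpleGraph Finset

/-!
Every graph on `n` vertices has exactly `n + 1` cliques with at most one vertex. A clique with
two vertices `u ≠ v` contains the edge `uv`, so by edge-disjointness it is a clique of at most one
`G i`; hence the cliques with at least two vertices contribute at most `2 ^ n - (n + 1)` in total.
-/

/-- Number of cliques (complete vertex subsets, including the empty set) of `G`. -/
noncomputable def cliqueCount {V : Type*} (G : SimpleGraph V) : ℕ :=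
  Nat.card {s : Finset V // G.IsClique (s : Set V)}

/-- Number of independent sets of `G` (cliques of the complement). -/
noncomputable def indepCount {V : Type*} (G : SimpleGraph V) : ℕ :=
  cliqueCount Gᶜ

theorem Finset.card_filter_card_le_one {V : Type*} [Fintype V] [DecidableEq V] :
    #{s : Finset V | #s ≤ 1} = Fintype.card V + 1 := by
  have : ({s : Finset V | #s ≤ 1} : Finset _) =
      insert ∅ (univ.map ⟨singleton, singleton_injective⟩) := by
    ext s
    simp [Nat.le_one_iff_eq_zero_or_eq_one, card_eq_one, eq_comm]
  rw [this, card_insert_of_notMem (by simp), card_map, card_univ]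

theorem Finset.card_filter_one_lt_card_add {V : Type*} [Fintype V] [DecidableEq V] :
    #{s : Finset V | 1 < #s} + (Fintype.card V + 1) = 2 ^ Fintype.card V := by
  have := card_filter_add_card_filter_not (s := (univ : Finset (Finset V))) (#· ≤ 1)
  simp only [card_filter_card_le_one, not_le, card_univ, Fintype.card_finset] at this
  omega

namespace SimpleGraph

variable {V : Type*}

lemma isClique_of_card_le_one (G : SimpleGraph V) {s : Finset V} (hs : #s ≤ 1) :
    G.IsClique (s : Set V) :=
  (card_le_one_iff_subsingleton.mp hs).pairwise _

lemma eq_of_isClique_of_one_lt_card {ι : Type*} {G : ι → SimpleGraph V}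
    (hG : Pairwise fun i j => Disjoint (G i) (G j)) {i j : ι} {s : Finset V}
    (hi : (G i).IsClique (s : Set V)) (hj : (G j).IsClique (s : Set V)) (hs : 1 < #s) :
    i = j := by
  obtain ⟨u, hu, v, hv, huv⟩ := one_lt_card.mp hs
  by_contra hij
  exact disjoint_left.mp (hG hij) u v (hi hu hv huv) (hj hu hv huv)

variable [Fintype V] [DecidableEq V]

lemma cliqueCount_eq_add_card_nontrivial_cliques (G : SimpleGraph V) [DecidableRel G.Adj] :
    cliqueCount G = Fintype.card V + 1 + #{s : Finset V | G.IsClique (s : Set V) ∧ 1 < #s} := by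
  rw [cliqueCount, Nat.card_eq_fintype_card, Fintype.card_subtype,
    ← Finset.card_filter_card_le_one,
    ← card_filter_add_card_filter_not (fun s : Finset V => #s ≤ 1),
    filter_filter, filter_filter]
  congr 2
  · ext s; simpa using G.isClique_of_card_le_one
  · ext s; simp [not_le]

lemma sum_card_nontrivial_cliques_le {ι : Type*} [Fintype ι] {G : ι → SimpleGraph V}
    [∀ i, DecidableRel (G i).Adj] (hG : Pairwise fun i j => Disjoint (G i) (G j)) :
    ∑ i, #{s : Finset V | (G i).IsClique (s : Set V) ∧ 1 < #s} ≤
      #{s : Finset V | 1 < #s} := by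
  rw [← card_biUnion]
  · exact card_le_card fun s hs => by simp_all
  · intro i _ j _ hij
    simp only [Function.onFun, Finset.disjoint_left, mem_filter, mem_univ, true_and]
    exact fun s hi hj => hij (eq_of_isClique_of_one_lt_card hG hi.1 hj.1 hi.2)

end SimpleGraph

theorem sum_cliqueCount_le_general {V : Type*} [Fintype V] (n r : ℕ)
    (hn : Fintype.card V = n) (G : Fin r → SimpleGraph V)
    (hdisj : ∀ i j, i ≠ j → ∀ u v, ¬((G i).Adj u v ∧ (G j).Adj u v)) :
    ∑ i, cliqueCount (G i) ≤ (r - 1) * (n + 1) + 2 ^ n := by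
  classical
  subst hn
  have hG : Pairwise fun i j => Disjoint (G i) (G j) := fun i j hij =>
    disjoint_left.mpr fun u v hi hj => hdisj i j hij u v ⟨hi, hj⟩
  have hcount := Finset.card_filter_one_lt_card_add (V := V)
  calc ∑ i, cliqueCount (G i)
      = r * (Fintype.card V + 1) +
          ∑ i, #{s : Finset V | (G i).IsClique (s : Set V) ∧ 1 < #s} := by
        simp [cliqueCount_eq_add_card_nontrivial_cliques, sum_add_distrib]
    _ ≤ r * (Fintype.card V + 1) + #{s : Finset V | 1 < #s} := by
        gcongr; exact sum_card_nontrivial_cliques_le hG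
    _ ≤ (r - 1) * (Fintype.card V + 1) + 2 ^ Fintype.card V := by
        rcases r with _ | r
        · omega
        · rw [Nat.add_sub_cancel, add_one_mul]; omega

theorem sum_cliqueCount_le {V : Type*} [Fintype V] (n r : ℕ) (hr : 2 ≤ r)
    (hn : Fintype.card V = n) (G : Fin r → SimpleGraph V)
    (hdisj : ∀ i j, i ≠ j → ∀ u v, ¬((G i).Adj u v ∧ (G j).Adj u v))
    (hcover : ∀ u v : V, u ≠ v → ∃ i, (G i).Adj u v) :
    ∑ i, cliqueCount (G i) ≤ (r - 1) * (n + 1) + 2 ^ n :=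
  sum_cliqueCount_le_general n r hn G hdisj
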